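/- arXiv:2305.14127 — 4 statements merged into one kernel-verified Lean document; each statement's English description precedes it below -/
import Mathlib

section
/- There is no map f from the set ω^{<ω} of finite sequences of natural numbers to ω × ω that is injective and both preserves and reflects the two array relations, where on ω^{<ω} one sets η <₁ ν iff length(η) < length(ν) and η <₂ ν iff length(η) = length(ν) and η <_lex ν, and on ω × ω one sets (i,j) <₁ (s,t) iff i < s and (i,j) <₂ (s,t) iff i = s and j < t. -/
/-- Lexicographic order on finite sequences of naturals: proper prefixes come
first, otherwise the first differing entry decides. -/
def llex (l m : List ℕ) : Prop := List.Lex (· < ·) l m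

/-- The first array relation on the tree `ω^{<ω}`. -/
def treeR1 (η ν : List ℕ) : Prop := η.length < ν.length

/-- The second array relation on the tree `ω^{<ω}`. -/
def treeR2 (η ν : List ℕ) : Prop := η.length = ν.length ∧ llex η ν

/-- The first array relation on `ω × ω`. -/
def arR1 (p q : ℕ × ℕ) : Prop := p.1 < q.1

/-- The second array relation on `ω × ω`. -/
def arR2 (p q : ℕ × ℕ) : Prop := p.1 = q.1 ∧ p.2 < q.2

/-- There is no injective map `ω^{<ω} → ℕ × ℕ` preserving and reflecting the
two array relations. -/
theorem no_array_embedding :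
    ¬ ∃ f : List ℕ → ℕ × ℕ, Function.Injective f ∧
      (∀ η ν : List ℕ, treeR1 η ν ↔ arR1 (f η) (f ν)) ∧
      (∀ η ν : List ℕ, treeR2 η ν ↔ arR2 (f η) (f ν)) := by
  rintro ⟨f, -, -, h2⟩
  set g : ℕ → ℕ := fun m => (f [0, m]).2 with hg
  have hmono : StrictMono g := by
    apply strictMono_nat_of_lt_succ
    intro m
    have := (h2 [0, m] [0, m + 1]).mp
      ⟨rfl, List.Lex.cons (List.Lex.rel (Nat.lt_succ_self m))⟩
    exact this.2
  have hub : ∀ m, g m < (f [1, 0]).2 := by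
    intro m
    have := (h2 [0, m] [1, 0]).mp ⟨rfl, List.Lex.rel Nat.zero_lt_one⟩
    exact this.2
  have := hub (f [1, 0]).2
  have hle : (f [1, 0]).2 ≤ g (f [1, 0]).2 := hmono.le_apply
  omega
end

section
/- Fix k ≥ 1 and define, by recursion on m, maps f_k^m : k^{≤m} → ω^{<ω} and numbers l_k^m by: f_k^m(∅) = ∅ for all m; l_k^m = max over η ∈ k^{≤m} of (length(f_k^m(η)) + 1); and f_k^{m+1}(⟨i⟩ ⌢ η) = ⟨i⟩ ⌢ ⟨0⟩^{(i+1)·l_k^m} ⌢ f_k^m(η) for i < k and η ∈ k^{≤m}. Then each f_k^m is injective, preserves and reflects the prefix relation, commutes with meets (longest common prefixes), preserves and reflects the lexicographic order, and moreover η <_lex ν implies length(f_k^m(η)) < length(f_k^m(ν)). -/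
/-- The longest common prefix (meet) of two finite sequences. -/
def meet : List ℕ → List ℕ → List ℕ
  | a :: l, b :: m => if a = b then a :: meet l m else []
  | _, _ => []

/-- Membership in `k^{≤m}`: lists of length at most `m` with entries `< k`. -/
def InTree (k m : ℕ) (η : List ℕ) : Prop := η.length ≤ m ∧ ∀ a ∈ η, a < k

/-- The maps `f_k^m : k^{≤m} → ω^{<ω}` defined by `f_k^m(∅) = ∅` and
`f_k^{m+1}(⟨i⟩ ⌢ η) = ⟨i⟩ ⌢ ⟨0⟩^{(i+1)·l_k^m} ⌢ f_k^m(η)`, where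
`l_k^m = max { length (f_k^m η) + 1 : η ∈ k^{≤m} }`. -/
noncomputable def fkm (k : ℕ) : ℕ → List ℕ → List ℕ
  | 0, _ => []
  | m + 1, [] => []
  | m + 1, i :: η =>
      i :: (List.replicate ((i + 1) *
          sSup {x | ∃ ν : List ℕ, InTree k m ν ∧ x = (fkm k m ν).length + 1}) 0
        ++ fkm k m η)

/-- `l_k^m = max { length (f_k^m η) + 1 : η ∈ k^{≤m} }`. -/
noncomputable def lkm (k m : ℕ) : ℕ :=
  sSup {x | ∃ ν : List ℕ, InTree k m ν ∧ x = (fkm k m ν).length + 1}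

lemma fkm_zero (k : ℕ) (η : List ℕ) : fkm k 0 η = [] := by simp [fkm]
lemma fkm_nil (k m : ℕ) : fkm k (m+1) [] = [] := by simp [fkm]
lemma fkm_cons (k m i : ℕ) (η : List ℕ) :
    fkm k (m+1) (i :: η) = i :: (List.replicate ((i+1) * lkm k m) 0 ++ fkm k m η) := by
  simp [fkm, lkm]

lemma InTree_cons {k m i : ℕ} {η : List ℕ} :
    InTree k (m+1) (i :: η) ↔ i < k ∧ InTree k m η := by
  constructor
  · rintro ⟨h1, h2⟩
    exact ⟨h2 i (.head _), Nat.succ_le_succ_iff.mp h1, fun a ha => h2 a (.tail _ ha)⟩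
  · rintro ⟨hi, h1, h2⟩
    refine ⟨Nat.succ_le_succ h1, ?_⟩
    intro a ha
    rcases List.mem_cons.mp ha with rfl | ha
    · exact hi
    · exact h2 a ha

lemma fkm_bdd (k : ℕ) : ∀ m, ∃ B, ∀ η, InTree k m η → (fkm k m η).length ≤ B := by
  intro m
  induction m with
  | zero => exact ⟨0, fun η _ => by simp [fkm_zero]⟩
  | succ m ih =>
    obtain ⟨B, hB⟩ := ih
    refine ⟨1 + k * lkm k m + B, ?_⟩
    rintro (_ | ⟨i, η⟩) h
    · simp [fkm_nil]
    · obtain ⟨hi, hη⟩ := InTree_cons.mp h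
      simp only [fkm_cons, List.length_cons, List.length_append, List.length_replicate]
      have h1 : (i+1) * lkm k m ≤ k * lkm k m := Nat.mul_le_mul_right _ hi
      have h2 := hB η hη
      omega

lemma len_lt_lkm {k m : ℕ} {η : List ℕ} (h : InTree k m η) :
    (fkm k m η).length < lkm k m := by
  obtain ⟨B, hB⟩ := fkm_bdd k m
  have hbdd : BddAbove {x | ∃ ν : List ℕ, InTree k m ν ∧ x = (fkm k m ν).length + 1} := by
    refine ⟨B + 1, ?_⟩
    rintro x ⟨ν, hν, rfl⟩
    exact Nat.succ_le_succ (hB ν hν)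
  exact le_csSup hbdd ⟨η, h, rfl⟩

lemma meet_prefix : ∀ η ν : List ℕ, meet η ν <+: η := by
  intro η
  induction η with
  | nil => intro ν; cases ν <;> simp [meet]
  | cons a l ih =>
    intro ν
    cases ν with
    | nil => simp [meet]
    | cons b m =>
      by_cases h : a = b
      · subst h; simpa [meet] using ih m
      · simp [meet, h]

lemma InTree_of_prefix {k m : ℕ} {η ν : List ℕ} (hp : η <+: ν) (h : InTree k m ν) :
    InTree k m η :=
  ⟨le_trans (List.IsPrefix.length_le hp) h.1, fun a ha => h.2 a (hp.sublist.mem ha)⟩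

lemma meet_append (l : List ℕ) : ∀ x y, meet (l ++ x) (l ++ y) = l ++ meet x y := by
  induction l with
  | nil => intro x y; rfl
  | cons a l ih => intro x y; simp [meet, ih]

lemma lex_cons_iff' {a b : ℕ} {l m : List ℕ} :
    llex (a :: l) (b :: m) ↔ a < b ∨ (a = b ∧ llex l m) := by
  constructor
  · intro h
    cases h with
    | cons h => exact Or.inr ⟨rfl, h⟩
    | rel h => exact Or.inl h
  · rintro (h | ⟨rfl, h⟩)
    · exact List.Lex.rel h
    · exact List.Lex.cons h

lemma lex_append (l : List ℕ) {x y : List ℕ} : llex (l ++ x) (l ++ y) ↔ llex x y := by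
  induction l with
  | nil => rfl
  | cons a l ih => simpa [llex, List.lex_cons_iff] using ih

theorem fkm_properties (k m : ℕ) (hk : 1 ≤ k) :
    (∀ η ν : List ℕ, InTree k m η → InTree k m ν →
      fkm k m η = fkm k m ν → η = ν) ∧
    (∀ η ν : List ℕ, InTree k m η → InTree k m ν →
      (η <+: ν ↔ fkm k m η <+: fkm k m ν)) ∧
    (∀ η ν : List ℕ, InTree k m η → InTree k m ν →
      fkm k m (meet η ν) = meet (fkm k m η) (fkm k m ν)) ∧
    (∀ η ν : List ℕ, InTree k m η → InTree k m ν →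
      (llex η ν ↔ llex (fkm k m η) (fkm k m ν))) ∧
    (∀ η ν : List ℕ, InTree k m η → InTree k m ν →
      llex η ν → (fkm k m η).length < (fkm k m ν).length) := by
  induction m with
  | zero =>
    have he : ∀ η : List ℕ, InTree k 0 η → η = [] := by
      intro η h
      exact List.length_eq_zero_iff.mp (Nat.le_zero.mp h.1)
    refine ⟨?_, ?_, ?_, ?_, ?_⟩ <;> intro η ν hη hν <;>
      simp [he η hη, he ν hν, fkm_zero, meet, llex, List.not_lex_nil]
  | succ m ih =>
    obtain ⟨inj, pre, mt, lx, ln⟩ := ih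
    refine ⟨?_, ?_, ?_, ?_, ?_⟩
    -- injectivity
    · rintro (_ | ⟨i, η⟩) (_ | ⟨j, ν⟩) hη hν h
      · rfl
      · simp [fkm_nil, fkm_cons] at h
      · simp [fkm_nil, fkm_cons] at h
      · obtain ⟨hi, hη'⟩ := InTree_cons.mp hη
        obtain ⟨hj, hν'⟩ := InTree_cons.mp hν
        simp only [fkm_cons, List.cons.injEq] at h
        obtain ⟨rfl, h2⟩ := h
        have := List.append_inj_right h2 (by simp)
        rw [inj η ν hη' hν' this]
    -- prefix
    · rintro (_ | ⟨i, η⟩) (_ | ⟨j, ν⟩) hη hν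
      · simp [fkm_nil]
      · simp [fkm_nil, fkm_cons]
      · simp [fkm_nil, fkm_cons]
      · obtain ⟨hi, hη'⟩ := InTree_cons.mp hη
        obtain ⟨hj, hν'⟩ := InTree_cons.mp hν
        simp only [fkm_cons, List.cons_prefix_cons]
        constructor
        · rintro ⟨rfl, h⟩
          exact ⟨rfl, (List.prefix_append_right_inj _).mpr ((pre η ν hη' hν').mp h)⟩
        · rintro ⟨rfl, h⟩
          exact ⟨rfl, (pre η ν hη' hν').mpr ((List.prefix_append_right_inj _).mp h)⟩
    -- meet
    · rintro (_ | ⟨i, η⟩) (_ | ⟨j, ν⟩) hη hν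
      · simp [meet, fkm_nil]
      · simp [meet, fkm_nil, fkm_cons]
      · simp [meet, fkm_nil, fkm_cons]
      · obtain ⟨hi, hη'⟩ := InTree_cons.mp hη
        obtain ⟨hj, hν'⟩ := InTree_cons.mp hν
        by_cases hij : i = j
        · subst hij
          have e1 : meet (i :: η) (i :: ν) = i :: meet η ν := by simp [meet]
          rw [e1, fkm_cons, fkm_cons, fkm_cons, mt η ν hη' hν']
          simp [meet, meet_append]
        · simp [meet, hij, fkm_cons, fkm_nil]
    -- lex
    · rintro (_ | ⟨i, η⟩) (_ | ⟨j, ν⟩) hη hν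
      · simp [fkm_nil, llex, List.not_lex_nil]
      · simp only [fkm_nil, fkm_cons]
        constructor <;> intro _ <;> exact List.Lex.nil
      · simp [fkm_nil, fkm_cons, llex, List.not_lex_nil]
      · obtain ⟨hi, hη'⟩ := InTree_cons.mp hη
        obtain ⟨hj, hν'⟩ := InTree_cons.mp hν
        simp only [fkm_cons, lex_cons_iff']
        constructor
        · rintro (h | ⟨rfl, h⟩)
          · exact Or.inl h
          · exact Or.inr ⟨rfl, (lex_append _).mpr ((lx η ν hη' hν').mp h)⟩
        · rintro (h | ⟨rfl, h⟩)
          · exact Or.inl h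
          · exact Or.inr ⟨rfl, (lx η ν hη' hν').mpr ((lex_append _).mp h)⟩
    -- length
    · rintro (_ | ⟨i, η⟩) (_ | ⟨j, ν⟩) hη hν h
      · exact absurd h (List.not_lex_nil)
      · simp [fkm_nil, fkm_cons]
      · exact absurd h (List.not_lex_nil)
      · obtain ⟨hi, hη'⟩ := InTree_cons.mp hη
        obtain ⟨hj, hν'⟩ := InTree_cons.mp hν
        rcases lex_cons_iff'.mp h with hij | ⟨rfl, h'⟩
        · simp only [fkm_cons, List.length_cons, List.length_append, List.length_replicate]
          have h1 : (fkm k m η).length < lkm k m := len_lt_lkm hη'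
          have h2 : (i + 2) * lkm k m ≤ (j + 1) * lkm k m :=
            Nat.mul_le_mul_right _ (by omega)
          have h3 : (i + 1) * lkm k m + lkm k m = (i + 2) * lkm k m := by ring
          calc (i+1) * lkm k m + (fkm k m η).length + 1
              < (i+1) * lkm k m + lkm k m + 1 := by omega
            _ = (i+2) * lkm k m + 1 := by rw [h3]
            _ ≤ (j+1) * lkm k m + 1 := by omega
            _ ≤ (j+1) * lkm k m + (fkm k m ν).length + 1 := by omega
        · simp only [fkm_cons, List.length_cons, List.length_append, List.length_replicate]
          have := ln η ν hη' hν' h'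
          omega
end

section
/- Let f' : ω^{<ω} → J be an order isomorphism onto a linear order J for the lexicographic order, let f(η) = (length(η), f'(η)) ∈ ω × J, and let g(i,j) = ⟨0⟩^{2i} ⌢ ⟨j+1⟩ ∈ ω^{<ω}. Then the composite f ∘ g : ω × ω → ω × J is injective and both preserves and reflects the array relations: (i,j) <₁ (s,t) iff (f∘g)(i,j) <₁ (f∘g)(s,t), and (i,j) <₂ (s,t) iff (f∘g)(i,j) <₂ (f∘g)(s,t), where <₁ compares first coordinates and <₂ requires equal first coordinates and compares second coordinates. -/
/-- The first array relation on `ω × J`. -/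
def arR1' {J : Type*} (p q : ℕ × J) : Prop := p.1 < q.1

/-- The second array relation on `ω × J` for a linear order `J`. -/
def arR2' {J : Type*} [LT J] (p q : ℕ × J) : Prop := p.1 = q.1 ∧ p.2 < q.2

/-- `g(i,j) = ⟨0⟩^{2i} ⌢ ⟨j+1⟩`. -/
def g (p : ℕ × ℕ) : List ℕ := List.replicate (2 * p.1) 0 ++ [p.2 + 1]

lemma lex_replicate (n a b : ℕ) (h : a < b) :
    List.Lex (· < ·) (List.replicate n 0 ++ [a]) (List.replicate n 0 ++ [b]) := by
  induction n with
  | zero => exact List.Lex.rel h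
  | succ k ih => simpa [List.replicate_succ] using List.Lex.cons (a := 0) ih

lemma glen (p : ℕ × ℕ) : (g p).length = 2 * p.1 + 1 := by
  simp [g]

lemma g_inj : Function.Injective g := by
  intro p q h
  have hl : 2 * p.1 + 1 = 2 * q.1 + 1 := by rw [← glen, ← glen, h]
  have h1 : p.1 = q.1 := by omega
  have h2 : p.2 = q.2 := by
    unfold g at h
    rw [h1] at h
    have := (List.append_cancel_left h)
    simpa using this
  exact Prod.ext h1 h2

theorem fg_array_embedding (J : Type*) [LinearOrder J]
    (f' : List ℕ → J) (hbij : Function.Bijective f')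
    (hiso : ∀ η ν : List ℕ, llex η ν ↔ f' η < f' ν) :
    let f : List ℕ → ℕ × J := fun η => (η.length, f' η)
    Function.Injective (f ∘ g) ∧
    (∀ p q : ℕ × ℕ, arR1 p q ↔ arR1' (f (g p)) (f (g q))) ∧
    (∀ p q : ℕ × ℕ, arR2 p q ↔ arR2' (f (g p)) (f (g q))) := by
  intro f
  refine ⟨?_, ?_, ?_⟩
  · intro p q h
    have : f' (g p) = f' (g q) := congrArg Prod.snd h
    exact g_inj (hbij.injective this)
  · intro p q
    simp only [arR1, arR1', f, glen]
    omega
  · intro p q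
    constructor
    · rintro ⟨h1, h2⟩
      refine ⟨by simp [f, glen, h1], ?_⟩
      have : llex (g p) (g q) := by
        unfold llex g
        rw [h1]
        exact lex_replicate _ _ _ (by omega)
      exact (hiso _ _).mp this
    · rintro ⟨h1, h2⟩
      have hfst : p.1 = q.1 := by
        simp only [f, glen] at h1; omega
      refine ⟨hfst, ?_⟩
      by_contra hlt
      push_neg at hlt
      rcases Nat.lt_or_ge q.2 p.2 with hc | hc
      · have : llex (g q) (g p) := by
          unfold llex g
          rw [hfst]
          exact lex_replicate _ _ _ (by omega)
        have := (hiso _ _).mp this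
        exact absurd h2 (not_lt_of_gt this)
      · have : p.2 = q.2 := le_antisymm hc hlt
        have : g p = g q := by rw [Prod.ext hfst this]
        rw [this] at h2
        exact lt_irrefl _ h2
end

section
/- (Erdős–Rado) For every n < ω and every infinite cardinal μ, the partition relation (ℶ_n(μ))⁺ → (μ⁺)^{n+1}_μ holds: for every function f from the (n+1)-element subsets of a set of cardinality (ℶ_n(μ))⁺ to a set of colours of cardinality at most μ, there is a subset X of cardinality μ⁺ all of whose (n+1)-element subsets receive the same colour. -/
open Cardinal

universe u

/-- Iterated beth function relative to `μ`: `ℶ_0(μ) = μ`, `ℶ_{k+1}(μ) = 2^{ℶ_k(μ)}`. -/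
def iterBeth (μ : Cardinal.{u}) : ℕ → Cardinal.{u}
  | 0 => μ
  | n + 1 => 2 ^ iterBeth μ n

open Set Order

lemma aleph0_le_iterBeth {μ : Cardinal.{u}} (hμ : ℵ₀ ≤ μ) : ∀ n, ℵ₀ ≤ iterBeth μ n
  | 0 => hμ
  | n + 1 => le_trans (aleph0_le_iterBeth hμ n) (le_of_lt (Cardinal.cantor _))

lemma mu_le_iterBeth {μ : Cardinal.{u}} (n : ℕ) : μ ≤ iterBeth μ n := by
  induction n with
  | zero => exact le_rfl
  | succ n ih => exact ih.trans (le_of_lt (Cardinal.cantor _))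

lemma mk_small_finsets {α : Type u} {B : Set α} {κ : Cardinal.{u}} (hκ : ℵ₀ ≤ κ)
    (hB : #B ≤ κ) (p : Finset α → Prop) : #{s : Finset α // ↑s ⊆ B ∧ p s} ≤ κ := by
  classical
  have hinj : Function.Injective
      (fun s : {s : Finset α // ↑s ⊆ B ∧ p s} => (s.1.subtype (· ∈ B) : Finset B)) := by
    rintro ⟨s, hs, _⟩ ⟨t, ht, _⟩ h
    simp only [Subtype.mk.injEq] at h ⊢
    have hs' : (s.subtype (· ∈ B)).map (Function.Embedding.subtype _) = s := by
      rw [Finset.subtype_map, Finset.filter_true_of_mem (fun x hx => hs hx)]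
    have ht' : (t.subtype (· ∈ B)).map (Function.Embedding.subtype _) = t := by
      rw [Finset.subtype_map, Finset.filter_true_of_mem (fun x hx => ht hx)]
    rw [← hs', ← ht', h]
  refine le_trans (Cardinal.mk_le_of_injective hinj) ?_
  rcases finite_or_infinite (↥B) with h | h
  · haveI := h
    haveI := Fintype.ofFinite (↥B)
    exact le_trans (le_of_lt (Cardinal.lt_aleph0_of_finite _)) hκ
  · haveI := h
    rw [Cardinal.mk_finset_of_infinite]
    exact hB

section Step

variable {μ : Cardinal.{u}} (n : ℕ) {α C : Type u} (f : Finset α → C)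

theorem step_main (hμ : ℵ₀ ≤ μ)
    (IH : ∀ α : Type u, #α = succ (iterBeth μ n) → ∀ C : Type u, #C ≤ μ →
      ∀ f : Finset α → C, ∃ X : Set α, #X = succ μ ∧
        ∀ s t : Finset α, s.card = n + 1 → t.card = n + 1 → ↑s ⊆ X → ↑t ⊆ X → f s = f t)
    (hα : #α = succ (iterBeth μ (n + 1))) (hC : #C ≤ μ) :
    ∃ X : Set α, #X = succ μ ∧
      ∀ s t : Finset α, s.card = n + 2 → t.card = n + 2 → ↑s ⊆ X → ↑t ⊆ X → f s = f t := by
  classical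
  set κ := iterBeth μ n with hκdef
  have hκ : ℵ₀ ≤ κ := aleph0_le_iterBeth hμ n
  have hμκ : μ ≤ κ := mu_le_iterBeth n
  have hα2 : #α = succ (2 ^ κ) := hα
  have hκ2κ : κ ≤ 2 ^ κ := le_of_lt (cantor κ)
  have h2κ : ℵ₀ ≤ 2 ^ κ := hκ.trans hκ2κ
  have hμ2κ : μ ≤ 2 ^ κ := hμκ.trans hκ2κ
  have hpow : ((2 : Cardinal.{u}) ^ κ) ^ κ = 2 ^ κ := by rw [← power_mul, mul_eq_self hκ]
  have hαpos : (0 : Cardinal) < #α := by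
    rw [hα2]; exact lt_of_lt_of_le aleph0_pos (h2κ.trans (le_succ _))
  haveI hαne : Nonempty α := mk_ne_zero_iff.1 (ne_of_gt hαpos)
  haveI hCne : Nonempty C := ⟨f ∅⟩
  -- Agreement of two "tops" over a base set
  set Agree : Set α → α → α → Prop := fun B c c' =>
    ∀ s : Finset α, ↑s ⊆ B → s.card = n + 1 → f (insert c s) = f (insert c' s)
    with hAgree
  -- witness function
  have exists_wit : ∀ B : Set α,
      ∃ w : ({s : Finset α // ↑s ⊆ B ∧ s.card = n + 1} → C) → α,
        ∀ c ∉ B, w (fun s => f (insert c s.1)) ∉ B ∧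
          Agree B c (w (fun s => f (insert c s.1))) := by
    intro B
    set Good : ({s : Finset α // ↑s ⊆ B ∧ s.card = n + 1} → C) → Set α := fun g =>
      {c' | c' ∉ B ∧ ∀ (s : Finset α) (hs : ↑s ⊆ B) (hcard : s.card = n + 1),
        f (insert c' s) = g ⟨s, hs, hcard⟩} with hGood
    refine ⟨fun g => if h : (Good g).Nonempty then h.choose else Classical.arbitrary α, ?_⟩
    intro c hc
    have hne : (Good (fun s => f (insert c s.1))).Nonempty :=
      ⟨c, hc, fun s hs hcard => rfl⟩
    simp only [dif_pos hne]
    obtain ⟨h1, h2⟩ := hne.choose_spec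
    exact ⟨h1, fun s hs hcard => (h2 s hs hcard).symm⟩
  choose wit hwit using exists_wit
  -- number of patterns over a small base is at most 2 ^ κ
  have pat_card : ∀ B : Set α, #B ≤ κ →
      #({s : Finset α // ↑s ⊆ B ∧ s.card = n + 1} → C) ≤ 2 ^ κ := by
    intro B hB
    have h1 : #({s : Finset α // ↑s ⊆ B ∧ s.card = n + 1} → C)
        = #C ^ #{s : Finset α // ↑s ⊆ B ∧ s.card = n + 1} := by
      rw [Cardinal.mk_arrow, Cardinal.lift_id, Cardinal.lift_id]
    rw [h1]
    calc #C ^ #{s : Finset α // ↑s ⊆ B ∧ s.card = n + 1}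
        ≤ (2 ^ κ) ^ #{s : Finset α // ↑s ⊆ B ∧ s.card = n + 1} :=
          power_le_power_right (hC.trans hμ2κ)
      _ ≤ (2 ^ κ) ^ κ := power_le_power_left (ne_of_gt (lt_of_lt_of_le aleph0_pos h2κ)) (mk_small_finsets hκ hB _)
      _ = 2 ^ κ := hpow
  -- the chain of length succ κ
  haveI hWO : IsWellOrder ((succ κ).ord.ToType) (· < ·) := isWellOrder_lt
  have hWcard : #((succ κ).ord.ToType) = succ κ := by rw [Cardinal.mk_toType, card_ord]
  have hIio : ∀ j : ((succ κ).ord.ToType), #(Iio j) ≤ κ := fun j => lt_succ_iff.1 (Cardinal.mk_Iio_ord_toType j)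
  have wf : WellFounded ((· < ·) : ((succ κ).ord.ToType) → ((succ κ).ord.ToType) → Prop) := IsWellFounded.wf
  let F : (j : ((succ κ).ord.ToType)) → ((i : ((succ κ).ord.ToType)) → i < j → Set α) → Set α := fun j rec =>
    (⋃ i : Iio j, rec i.1 i.2) ∪
      ⋃ B : {B : Set α // B ⊆ (⋃ i : Iio j, rec i.1 i.2) ∧ #B ≤ κ}, Set.range (wit B.1)
  let A : ((succ κ).ord.ToType) → Set α := wf.fix F
  have A_eq : ∀ j, A j = F j fun i _ => A i := fun j => wf.fix_eq F j
  have A_decomp : ∀ j, A j = (⋃ i : Iio j, A i.1) ∪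
      ⋃ B : {B : Set α // B ⊆ (⋃ i : Iio j, A i.1) ∧ #B ≤ κ}, Set.range (wit B.1) := A_eq
  have A_card : ∀ j, #(A j) ≤ 2 ^ κ := by
    intro j
    refine wf.induction (C := fun j => #(A j) ≤ 2 ^ κ) j ?_
    intro j IHj
    rw [A_decomp j]
    have hprevcard : #(⋃ i : Iio j, A i.1) ≤ 2 ^ κ := by
      refine le_trans (mk_iUnion_le _) ?_
      have h1 : #(Iio j) ≤ 2 ^ κ := (hIio j).trans hκ2κ
      have h2 : ⨆ i : Iio j, #(A i.1) ≤ 2 ^ κ := ciSup_le' fun i => IHj i.1 i.2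
      calc #(Iio j) * ⨆ i : Iio j, #(A i.1) ≤ (2 ^ κ) * (2 ^ κ) := mul_le_mul' h1 h2
        _ = 2 ^ κ := mul_eq_self h2κ
    refine le_trans (mk_union_le _ _) ?_
    have hwitcard :
        #(⋃ B : {B : Set α // B ⊆ (⋃ i : Iio j, A i.1) ∧ #B ≤ κ}, Set.range (wit B.1))
          ≤ 2 ^ κ := by
      refine le_trans (mk_iUnion_le _) ?_
      have hidx : #{B : Set α // B ⊆ (⋃ i : Iio j, A i.1) ∧ #B ≤ κ} ≤ 2 ^ κ := by
        refine le_trans (Cardinal.mk_bounded_subset_le _ κ) ?_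
        have hmax : max #(⋃ i : Iio j, A i.1) ℵ₀ ≤ 2 ^ κ := max_le hprevcard h2κ
        calc max #(⋃ i : Iio j, A i.1) ℵ₀ ^ κ ≤ (2 ^ κ) ^ κ := power_le_power_right hmax
          _ = 2 ^ κ := hpow
      have hQ : ∀ B : {B : Set α // B ⊆ (⋃ i : Iio j, A i.1) ∧ #B ≤ κ},
          #(Set.range (wit B.1)) ≤ 2 ^ κ :=
        fun B => le_trans mk_range_le (pat_card B.1 B.2.2)
      calc _ ≤ (2 ^ κ) * (2 ^ κ) := mul_le_mul' hidx (ciSup_le' hQ)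
        _ = 2 ^ κ := mul_eq_self h2κ
    calc #(⋃ i : Iio j, A i.1) + _ ≤ (2 ^ κ) + (2 ^ κ) := add_le_add hprevcard hwitcard
      _ = 2 ^ κ := add_eq_self h2κ
  set Aall : Set α := ⋃ j, A j with hAalldef
  have Aall_card : #Aall ≤ 2 ^ κ := by
    refine le_trans (mk_iUnion_le _) ?_
    calc #((succ κ).ord.ToType) * ⨆ j, #(A j) ≤ succ κ * (2 ^ κ) :=
          mul_le_mul' (le_of_eq hWcard) (ciSup_le' A_card)
      _ ≤ (2 ^ κ) * (2 ^ κ) := mul_le_mul' (succ_le_of_lt (cantor κ)) le_rfl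
      _ = 2 ^ κ := mul_eq_self h2κ
  have closure : ∀ B : Set α, B ⊆ Aall → #B ≤ κ → ∀ c ∉ B,
      ∃ c', c' ∈ Aall ∧ c' ∉ B ∧ Agree B c c' := by
    intro B hBA hBκ c hc
    have hbound : ∃ j : ((succ κ).ord.ToType), B ⊆ ⋃ i : Iio j, A i.1 := by
      have hchoice : ∀ b : B, ∃ i : ((succ κ).ord.ToType), (b : α) ∈ A i := fun b => mem_iUnion.1 (hBA b.2)
      choose idx hidx using hchoice
      have hS : #(Set.range idx) < Ordinal.cof (Ordinal.type ((· < ·) : ((succ κ).ord.ToType) → ((succ κ).ord.ToType) → Prop)) := by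
        rw [Ordinal.type_toType, (isRegular_succ hκ).cof_eq]
        exact lt_of_le_of_lt (mk_range_le.trans hBκ) (lt_succ κ)
      obtain ⟨j, hj⟩ := not_isCofinal_iff.1 (fun hc => (not_le.2 (by rwa [Ordinal.cof_type] at hS)) (Order.cof_le hc))
      refine ⟨j, fun b hb => ?_⟩
      exact mem_iUnion.2 ⟨⟨idx ⟨b, hb⟩, hj _ (mem_range_self _)⟩, hidx ⟨b, hb⟩⟩
    obtain ⟨j, hBprev⟩ := hbound
    obtain ⟨h1, h2⟩ := hwit B c hc
    refine ⟨wit B (fun s => f (insert c s.1)), ?_, h1, h2⟩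
    refine mem_iUnion.2 ⟨j, ?_⟩
    rw [A_decomp j]
    exact Or.inr (mem_iUnion.2 ⟨⟨B, hBprev, hBκ⟩, mem_range_self _⟩)
  have hcstar : ∃ cstar : α, cstar ∉ Aall := by
    by_contra h
    push_neg at h
    have huniv : Aall = Set.univ := Set.eq_univ_of_forall h
    rw [huniv, Cardinal.mk_univ, hα2] at Aall_card
    exact absurd Aall_card (not_le.2 (lt_succ _))
  obtain ⟨cs, hcs⟩ := hcstar
  obtain ⟨c0, hc0, -, -⟩ := closure ∅ (empty_subset _) (by simp [hκ]) cs (notMem_empty cs)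
  haveI : Nonempty ↥Aall := ⟨⟨c0, hc0⟩⟩
  let G : (j : ((succ κ).ord.ToType)) → ((i : ((succ κ).ord.ToType)) → i < j → ↥Aall) → ↥Aall := fun j rec =>
    if h : ∃ c', c' ∈ Aall ∧ c' ∉ Set.range (fun i : Iio j => ((rec i.1 i.2 : α))) ∧
        Agree (Set.range (fun i : Iio j => ((rec i.1 i.2 : α)))) cs c'
    then ⟨h.choose, h.choose_spec.1⟩ else Classical.arbitrary _
  let a : ((succ κ).ord.ToType) → ↥Aall := wf.fix G
  have a_eq : ∀ j, a j = G j fun i _ => a i := fun j => wf.fix_eq G j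
  have a_spec : ∀ j : ((succ κ).ord.ToType), ((a j : α) ∉ Set.range (fun i : Iio j => ((a i.1 : α))) ∧
      Agree (Set.range (fun i : Iio j => ((a i.1 : α)))) cs (a j)) := by
    intro j
    have hBsub : Set.range (fun i : Iio j => ((a i.1 : α))) ⊆ Aall := by
      rintro x ⟨i, rfl⟩; exact (a i.1).2
    have hex : ∃ c', c' ∈ Aall ∧ c' ∉ Set.range (fun i : Iio j => ((a i.1 : α))) ∧
        Agree (Set.range (fun i : Iio j => ((a i.1 : α)))) cs c' :=
      closure _ hBsub (le_trans mk_range_le (hIio j)) cs (fun h => hcs (hBsub h))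
    rw [a_eq j]
    simp only [G, dif_pos hex]
    exact ⟨hex.choose_spec.2.1, hex.choose_spec.2.2⟩
  have a_inj : Function.Injective (fun i : ((succ κ).ord.ToType) => (a i : α)) := by
    intro i j hij
    by_contra hne
    rcases lt_or_gt_of_ne hne with h | h
    · exact (a_spec j).1 ⟨⟨i, h⟩, hij⟩
    · exact (a_spec i).1 ⟨⟨j, h⟩, hij.symm⟩
  let g : Finset ((succ κ).ord.ToType) → C := fun u => f (insert cs (u.image (fun i => (a i : α))))
  have hgdef : ∀ u, g u = f (insert cs (u.image (fun i => (a i : α)))) := fun _ => rfl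
  obtain ⟨Y, hYcard, hYhom⟩ := IH ((succ κ).ord.ToType) hWcard C hC g
  have key : ∀ s : Finset α, s.card = n + 2 → ↑s ⊆ (fun i : ((succ κ).ord.ToType) => (a i : α)) '' Y →
      ∃ u : Finset ((succ κ).ord.ToType), ↑u ⊆ Y ∧ u.card = n + 1 ∧ f s = g u := by
    intro s hcard hsub
    have hsub' : ↑s ⊆ Set.range (fun i : ((succ κ).ord.ToType) => (a i : α)) :=
      hsub.trans (image_subset_range _ _)
    set u : Finset ((succ κ).ord.ToType) := s.preimage (fun i : ((succ κ).ord.ToType) => (a i : α)) a_inj.injOn with hu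
    have himg : u.image (fun i : ((succ κ).ord.ToType) => (a i : α)) = s := by
      rw [hu, Finset.image_preimage]
      refine Finset.filter_true_of_mem ?_
      intro x hx
      exact hsub' hx
    have hucard : u.card = n + 2 := by
      rw [← hcard, ← himg, Finset.card_image_of_injective _ a_inj]
    have hune : u.Nonempty := by
      rw [← Finset.card_pos, hucard]; omega
    set jm := u.max' hune with hjm
    set u' := u.erase jm with hu'
    have hjmu : jm ∈ u := u.max'_mem hune
    have hu'card : u'.card = n + 1 := by
      rw [hu', Finset.card_erase_of_mem hjmu, hucard]
      omega
    have huY : ↑u ⊆ Y := by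
      intro i hi
      have hi' : i ∈ u := Finset.mem_coe.1 hi
      have hmem : (a i : α) ∈ s :=
        (Finset.mem_preimage (f := fun i : ((succ κ).ord.ToType) => (a i : α))).1 hi'
      obtain ⟨y, hy, hyi⟩ := hsub hmem
      have : y = i := a_inj hyi
      rwa [← this]
    have key2 : f s = g u' := by
      have hs_decomp : s = insert ((a jm : α)) (u'.image (fun i : ((succ κ).ord.ToType) => (a i : α))) := by
        have h1 : insert jm u' = u := Finset.insert_erase hjmu
        rw [← himg, ← h1, Finset.image_insert]
      have hset : ↑(u'.image (fun i : ((succ κ).ord.ToType) => (a i : α))) ⊆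
          Set.range (fun i : Iio jm => ((a i.1 : α))) := by
        intro x hx
        simp only [Finset.coe_image, mem_image, Finset.mem_coe] at hx
        obtain ⟨i, hi, rfl⟩ := hx
        have hilt : i < jm :=
          lt_of_le_of_ne (u.le_max' i (Finset.mem_of_mem_erase hi)) (Finset.ne_of_mem_erase hi)
        exact ⟨⟨i, hilt⟩, rfl⟩
      have hcard' : (u'.image (fun i : ((succ κ).ord.ToType) => (a i : α))).card = n + 1 := by
        rw [Finset.card_image_of_injective _ a_inj, hu'card]
      have hagree := (a_spec jm).2 (u'.image (fun i : ((succ κ).ord.ToType) => (a i : α))) hset hcard'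
      rw [hs_decomp, hgdef]
      exact hagree.symm
    refine ⟨u', fun x hx => huY (Finset.mem_of_mem_erase hx), hu'card, key2⟩
  refine ⟨(fun i : ((succ κ).ord.ToType) => (a i : α)) '' Y, ?_, ?_⟩
  · rw [mk_image_eq a_inj, hYcard]
  · intro s t hs ht hsX htX
    obtain ⟨us, husY, huscard, hfs⟩ := key s hs hsX
    obtain ⟨ut, hutY, hutcard, hft⟩ := key t ht htX
    rw [hfs, hft]
    exact hYhom us ut huscard hutcard husY hutY

end Step

theorem erdos_rado_aux (μ : Cardinal.{u}) (hμ : ℵ₀ ≤ μ) : ∀ n : ℕ, ∀ α : Type u,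
    #α = Order.succ (iterBeth μ n) → ∀ C : Type u, #C ≤ μ → ∀ f : Finset α → C,
    ∃ X : Set α, #X = Order.succ μ ∧
      ∀ s t : Finset α, s.card = n + 1 → t.card = n + 1 →
        ↑s ⊆ X → ↑t ⊆ X → f s = f t := by
  intro n
  induction n with
  | zero =>
    intro α hα C hC f
    classical
    have hreg : Cardinal.IsRegular (succ μ) := Cardinal.isRegular_succ hμ
    have hcof : #C < (succ μ).ord.cof := by
      rw [hreg.cof_eq]
      exact hC.trans_lt (lt_succ μ)
    obtain ⟨c, hc⟩ := Cardinal.infinite_pigeonhole_card (fun a : α => f {a}) (succ μ)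
      (le_of_eq hα.symm) (hμ.trans (le_succ μ)) hcof
    refine ⟨(fun a : α => f {a}) ⁻¹' {c}, ?_, ?_⟩
    · refine le_antisymm ?_ hc
      have : #↑((fun a : α => f {a}) ⁻¹' {c}) ≤ #α := mk_set_le _
      rw [hα] at this
      exact this.trans (le_of_eq rfl)
    · intro s t hs ht hsX htX
      obtain ⟨a, rfl⟩ := Finset.card_eq_one.1 hs
      obtain ⟨b, rfl⟩ := Finset.card_eq_one.1 ht
      have ha : f {a} = c := hsX (by simp)
      have hb : f {b} = c := htX (by simp)
      rw [ha, hb]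
  | succ n IH =>
    intro α hα C hC f
    exact step_main n f hμ IH hα hC

/-- Erdős–Rado: `(ℶ_n(μ))⁺ → (μ⁺)^{n+1}_μ` for every `n < ω` and infinite `μ`. -/
theorem erdos_rado (n : ℕ) (μ : Cardinal.{u}) (hμ : ℵ₀ ≤ μ)
    (α : Type u) (hα : #α = Order.succ (iterBeth μ n))
    (C : Type u) (hC : #C ≤ μ) (f : Finset α → C) :
    ∃ X : Set α, #X = Order.succ μ ∧
      ∀ s t : Finset α, s.card = n + 1 → t.card = n + 1 →
        ↑s ⊆ X → ↑t ⊆ X → f s = f t :=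
  erdos_rado_aux μ hμ n α hα C hC f
end
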